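/- The 3-marginal relaxation is sandwiched between the 2-marginal relaxation and the exact MMOT value: For every ρ ∈ ℝ^L with 0 ≤ ρ_p ≤ 1 for all p, the optimal values satisfy E_sdp[ρ] ≤ E_3sdp[ρ] ≤ E_sce[ρ], where E_3sdp[ρ] is the optimal value of the 3-marginal SDP. -/

import Mathlib

open Matrix BigOperators

noncomputable section

abbrev Idx (L : ℕ) := Fin L × Fin 2

/-- The fixed 1-marginal `μ_p^(1) = (1 - ρ_p, ρ_p)ᵀ`. -/
def mu1 {L : ℕ} (ρ : Fin L → ℝ) (p : Fin L) (t : Fin 2) : ℝ :=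
  if t = 0 then 1 - ρ p else ρ p

/-- The 1-marginal of a (signed) measure `μ` on `{0,1}^L`. -/
def marg1 {L : ℕ} (μ : (Fin L → Fin 2) → ℝ) (p : Fin L) (t : Fin 2) : ℝ :=
  ∑ s : Fin L → Fin 2, if s p = t then μ s else 0

/-- The 2-marginal of a (signed) measure `μ` on `{0,1}^L`. -/
def marg2 {L : ℕ} (μ : (Fin L → Fin 2) → ℝ) (p q : Fin L) (t u : Fin 2) : ℝ :=
  ∑ s : Fin L → Fin 2, if s p = t ∧ s q = u then μ s else 0

/-- `μ ∈ Π(ρ)` : probability measure on `{0,1}^L` with 1-marginals `(1-ρ_p, ρ_p)ᵀ`. -/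
def InPi {L : ℕ} (ρ : Fin L → ℝ) (μ : (Fin L → Fin 2) → ℝ) : Prop :=
  (∀ s, 0 ≤ μ s) ∧ (∑ s : Fin L → Fin 2, μ s = 1) ∧
  (∀ p t, marg1 μ p t = mu1 ρ p t)

/-- The MMOT cost of `μ`, written in terms of its 2-marginals. -/
def sceCost {L : ℕ} (C : Matrix (Idx L) (Idx L) ℝ) (μ : (Fin L → Fin 2) → ℝ) : ℝ :=
  ∑ p : Fin L, ∑ q : Fin L,
    if p ≠ q then ∑ t : Fin 2, ∑ u : Fin 2, C (p, t) (q, u) * marg2 μ p q t u else 0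

/-- Set of MMOT cost values over `Π(ρ)`; `E_sce[ρ]` is its infimum. -/
def sceValues {L : ℕ} (ρ : Fin L → ℝ) (C : Matrix (Idx L) (Idx L) ℝ) : Set ℝ :=
  {x | ∃ μ : (Fin L → Fin 2) → ℝ, InPi ρ μ ∧ x = sceCost C μ}

/-- Feasibility for the primal 2-marginal SDP. -/
def PrimalFeasible {L : ℕ} (ρ : Fin L → ℝ) (M : Matrix (Idx L) (Idx L) ℝ) : Prop :=
  M.PosSemidef ∧
  (∀ p q : Fin L, p ≠ q → ∀ t u : Fin 2, 0 ≤ M (p, t) (q, u)) ∧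
  (∀ p q : Fin L, p ≠ q → ∀ t : Fin 2, ∑ u : Fin 2, M (p, t) (q, u) = mu1 ρ p t) ∧
  (∀ p : Fin L, ∀ t u : Fin 2, M (p, t) (p, u) = if t = u then mu1 ρ p t else 0)

/-- Set of objective values attained by primal feasible points; `E_sdp[ρ]` is its infimum. -/
def primalValues {L : ℕ} (ρ : Fin L → ℝ) (C : Matrix (Idx L) (Idx L) ℝ) : Set ℝ :=
  {x | ∃ M : Matrix (Idx L) (Idx L) ℝ, PrimalFeasible ρ M ∧ x = Matrix.trace (C * M)}

/-- Feasibility for the 3-marginal SDP: primal 2-marginal feasibility of `M` together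
with nonnegative, permutation-symmetric 3-marginal variables `K_pqr` locally
consistent with the 2-marginal blocks of `M`. -/
def Feasible3 {L : ℕ} (ρ : Fin L → ℝ) (M : Matrix (Idx L) (Idx L) ℝ)
    (K : Fin L → Fin L → Fin L → Fin 2 → Fin 2 → Fin 2 → ℝ) : Prop :=
  PrimalFeasible ρ M ∧
  (∀ p q r : Fin L, p ≠ q → q ≠ r → p ≠ r → ∀ t u w : Fin 2, 0 ≤ K p q r t u w) ∧
  (∀ p q r : Fin L, p ≠ q → q ≠ r → p ≠ r → ∀ t u w : Fin 2,
      K p q r t u w = K p r q t w u ∧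
      K p q r t u w = K q p r u t w ∧
      K p q r t u w = K q r p u w t ∧
      K p q r t u w = K r p q w t u ∧
      K p q r t u w = K r q p w u t) ∧
  (∀ p q r : Fin L, p ≠ q → q ≠ r → p ≠ r → ∀ t u : Fin 2,
      M (p, t) (q, u) = ∑ w : Fin 2, K p q r t u w)

/-- Set of objective values of the 3-marginal SDP; `E_3sdp[ρ]` is its infimum. -/
def threeValues {L : ℕ} (ρ : Fin L → ℝ) (C : Matrix (Idx L) (Idx L) ℝ) : Set ℝ :=
  {x | ∃ (M : Matrix (Idx L) (Idx L) ℝ)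
         (K : Fin L → Fin L → Fin L → Fin 2 → Fin 2 → Fin 2 → ℝ),
       Feasible3 ρ M K ∧ x = Matrix.trace (C * M)}

/-!
Every `μ ∈ Π(ρ)` gives a feasible point of the 3-marginal SDP, namely its own 2- and
3-marginals, with objective value equal to the MMOT cost: the 2-marginal matrix is the Gram
combination `∑ₛ μ(s) eₛ eₛᵀ` of configuration indicators, hence positive semidefinite, and `C`
vanishes on the diagonal blocks the MMOT cost leaves out. Forgetting `K` leaves a 2-marginal
feasible point. The value sets are therefore nested, and their infima compare because the
largest one is bounded below (entries of a feasible `M` lie in `[0, 1]`) and the smallest is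
nonempty (it contains the cost of the product measure).
-/

open Finset

section General

variable {ι α R : Type*} [Fintype ι] [DecidableEq ι] [Fintype α] [DecidableEq α]
  [CommSemiring R]

theorem sum_ite_apply_eq_prod (f : ι → α → R) (p : ι) (t : α) :
    ∑ s : ι → α, (if s p = t then ∏ i, f i (s i) else 0) =
      f p t * ∏ i ∈ univ.erase p, ∑ a, f i a := by
  have hfilter : univ.filter (fun s : ι → α => s p = t) =
      Fintype.piFinset fun i => if i = p then {t} else univ := by
    ext s
    simp only [mem_filter, mem_univ, true_and, Fintype.mem_piFinset]
    refine ⟨fun h i => ?_, fun h => by simpa using h p⟩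
    split_ifs with hi
    · subst hi; simp [h]
    · exact mem_univ _
  rw [← sum_filter, hfilter, ← prod_univ_sum, ← mul_prod_erase _ _ (mem_univ p)]
  congr 1
  · simp
  · exact prod_congr rfl fun i hi => by simp [ne_of_mem_erase hi]

theorem neg_sum_abs_le_trace_mul {n : Type*} [Fintype n] (C M : Matrix n n ℝ)
    (hM : ∀ i j, M i j ∈ Set.Icc (0 : ℝ) 1) :
    -∑ i, ∑ j, |C i j| ≤ (C * M).trace := by
  simp only [Matrix.trace, Matrix.diag, Matrix.mul_apply, ← sum_neg_distrib]
  refine sum_le_sum fun i _ => sum_le_sum fun j _ => neg_le_of_abs_le ?_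
  rw [abs_mul]
  exact mul_le_of_le_one_right (abs_nonneg _) ((abs_of_nonneg (hM j i).1).trans_le (hM j i).2)

end General

section Marginals

variable {L : ℕ}

theorem marg2_comm (μ : (Fin L → Fin 2) → ℝ) (p q : Fin L) (t u : Fin 2) :
    marg2 μ p q t u = marg2 μ q p u t :=
  sum_congr rfl fun _ _ => if_congr and_comm rfl rfl

theorem sum_marg2 (μ : (Fin L → Fin 2) → ℝ) (p q : Fin L) (t : Fin 2) :
    ∑ u, marg2 μ p q t u = marg1 μ p t := by
  unfold marg2 marg1
  rw [sum_comm]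
  refine sum_congr rfl fun s _ => ?_
  by_cases h : s p = t <;> simp [h]

theorem marg2_self (μ : (Fin L → Fin 2) → ℝ) (p : Fin L) (t u : Fin 2) :
    marg2 μ p p t u = if t = u then marg1 μ p t else 0 := by
  unfold marg2 marg1
  split_ifs with h
  · simp [h]
  · exact sum_eq_zero fun s _ => if_neg fun hs => h (hs.1.symm.trans hs.2)

def marg3 (μ : (Fin L → Fin 2) → ℝ) (p q r : Fin L) (t u w : Fin 2) : ℝ :=
  ∑ s : Fin L → Fin 2, if s p = t ∧ s q = u ∧ s r = w then μ s else 0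

theorem marg3_nonneg {μ : (Fin L → Fin 2) → ℝ} (hμ : ∀ s, 0 ≤ μ s)
    (p q r : Fin L) (t u w : Fin 2) : 0 ≤ marg3 μ p q r t u w :=
  sum_nonneg fun s _ => by split_ifs <;> simp [hμ s]

theorem marg3_perm (μ : (Fin L → Fin 2) → ℝ) (p q r : Fin L) (t u w : Fin 2) :
    marg3 μ p q r t u w = marg3 μ p r q t w u ∧
    marg3 μ p q r t u w = marg3 μ q p r u t w ∧
    marg3 μ p q r t u w = marg3 μ q r p u w t ∧
    marg3 μ p q r t u w = marg3 μ r p q w t u ∧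
    marg3 μ p q r t u w = marg3 μ r q p w u t := by
  refine ⟨?_, ?_, ?_, ?_, ?_⟩ <;> exact sum_congr rfl fun _ _ => if_congr (by tauto) rfl rfl

theorem sum_marg3 (μ : (Fin L → Fin 2) → ℝ) (p q r : Fin L) (t u : Fin 2) :
    ∑ w, marg3 μ p q r t u w = marg2 μ p q t u := by
  unfold marg2 marg3
  rw [sum_comm]
  refine sum_congr rfl fun s _ => ?_
  by_cases h : s p = t ∧ s q = u
  · simp [h]
  · exact (sum_eq_zero fun w _ => if_neg fun hw => h ⟨hw.1, hw.2.1⟩).trans (if_neg h).symm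

end Marginals

section MarginalMatrix

variable {L : ℕ}

def marg2Matrix (μ : (Fin L → Fin 2) → ℝ) : Matrix (Idx L) (Idx L) ℝ :=
  Matrix.of fun i j => marg2 μ i.1 j.1 i.2 j.2

def configVec (s : Fin L → Fin 2) : Idx L → ℝ :=
  fun i => if s i.1 = i.2 then 1 else 0

theorem marg2Matrix_eq_sum (μ : (Fin L → Fin 2) → ℝ) :
    marg2Matrix μ = ∑ s, μ s • Matrix.vecMulVec (configVec s) (configVec s) := by
  ext i j
  simp only [marg2Matrix, marg2, Matrix.of_apply, Matrix.sum_apply, Matrix.smul_apply,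
    Matrix.vecMulVec_apply, configVec, smul_eq_mul]
  refine sum_congr rfl fun s _ => ?_
  split_ifs <;> simp_all

theorem marg2Matrix_posSemidef {μ : (Fin L → Fin 2) → ℝ} (hμ : ∀ s, 0 ≤ μ s) :
    (marg2Matrix μ).PosSemidef := by
  rw [marg2Matrix_eq_sum]
  refine Matrix.posSemidef_sum _ fun s _ => Matrix.PosSemidef.smul ?_ (hμ s)
  simpa using Matrix.posSemidef_vecMulVec_self_star (configVec s)

theorem primalFeasible_marg2Matrix {ρ : Fin L → ℝ} {μ : (Fin L → Fin 2) → ℝ}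
    (hμ : ∀ s, 0 ≤ μ s) (hmarg : ∀ p t, marg1 μ p t = mu1 ρ p t) :
    PrimalFeasible ρ (marg2Matrix μ) := by
  refine ⟨marg2Matrix_posSemidef hμ, fun p q _ t u => ?_, fun p q _ t => ?_, fun p t u => ?_⟩
  · exact sum_nonneg fun s _ => by split_ifs <;> simp [hμ s]
  · exact (sum_marg2 μ p q t).trans (hmarg p t)
  · exact (marg2_self μ p t u).trans (by rw [hmarg])

theorem feasible3_marg2Matrix {ρ : Fin L → ℝ} {μ : (Fin L → Fin 2) → ℝ}
    (hμ : ∀ s, 0 ≤ μ s) (hmarg : ∀ p t, marg1 μ p t = mu1 ρ p t) :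
    Feasible3 ρ (marg2Matrix μ) (marg3 μ) :=
  ⟨primalFeasible_marg2Matrix hμ hmarg, fun p q r _ _ _ => marg3_nonneg hμ p q r,
    fun p q r _ _ _ => marg3_perm μ p q r, fun p q r _ _ _ t u => (sum_marg3 μ p q r t u).symm⟩

theorem trace_mul_marg2Matrix {C : Matrix (Idx L) (Idx L) ℝ}
    (hC : ∀ p t u, C (p, t) (p, u) = 0) (μ : (Fin L → Fin 2) → ℝ) :
    (C * marg2Matrix μ).trace = sceCost C μ := by
  simp only [Matrix.trace, Matrix.diag, Matrix.mul_apply, Fintype.sum_prod_type, marg2Matrix,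
    Matrix.of_apply, sceCost]
  refine sum_congr rfl fun p _ => ?_
  rw [sum_comm]
  refine sum_congr rfl fun q _ => ?_
  split_ifs with hpq
  · exact sum_congr rfl fun t _ => sum_congr rfl fun u _ => by rw [marg2_comm]
  · obtain rfl : p = q := not_not.mp hpq
    simp [hC]

end MarginalMatrix

section Values

variable {L : ℕ} {ρ : Fin L → ℝ}

theorem mu1_mem_Icc (hρ : ∀ p, 0 ≤ ρ p ∧ ρ p ≤ 1) (p : Fin L) (t : Fin 2) :
    mu1 ρ p t ∈ Set.Icc (0 : ℝ) 1 := by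
  unfold mu1
  split_ifs <;> constructor <;> linarith [hρ p]

theorem sum_mu1 (ρ : Fin L → ℝ) (p : Fin L) : ∑ t, mu1 ρ p t = 1 := by
  simp [mu1]

def productMeasure (ρ : Fin L → ℝ) (s : Fin L → Fin 2) : ℝ :=
  ∏ p, mu1 ρ p (s p)

theorem productMeasure_inPi (hρ : ∀ p, 0 ≤ ρ p ∧ ρ p ≤ 1) : InPi ρ (productMeasure ρ) := by
  refine ⟨fun s => prod_nonneg fun p _ => (mu1_mem_Icc hρ p (s p)).1, ?_, fun p t => ?_⟩
  · simp only [productMeasure, ← Fintype.prod_sum, sum_mu1, prod_const_one]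
  · simp only [marg1, productMeasure, sum_ite_apply_eq_prod, sum_mu1, prod_const_one, mul_one]

theorem sceValues_nonempty (hρ : ∀ p, 0 ≤ ρ p ∧ ρ p ≤ 1) (C : Matrix (Idx L) (Idx L) ℝ) :
    (sceValues ρ C).Nonempty :=
  ⟨_, productMeasure ρ, productMeasure_inPi hρ, rfl⟩

theorem sceValues_subset_threeValues {C : Matrix (Idx L) (Idx L) ℝ}
    (hC : ∀ p t u, C (p, t) (p, u) = 0) : sceValues ρ C ⊆ threeValues ρ C := by
  rintro _ ⟨μ, ⟨hμ, -, hmarg⟩, rfl⟩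
  exact ⟨marg2Matrix μ, marg3 μ, feasible3_marg2Matrix hμ hmarg, (trace_mul_marg2Matrix hC μ).symm⟩

theorem threeValues_subset_primalValues (C : Matrix (Idx L) (Idx L) ℝ) :
    threeValues ρ C ⊆ primalValues ρ C := by
  rintro _ ⟨M, K, ⟨hM, -⟩, rfl⟩
  exact ⟨M, hM, rfl⟩

theorem PrimalFeasible.mem_Icc (hρ : ∀ p, 0 ≤ ρ p ∧ ρ p ≤ 1) {M : Matrix (Idx L) (Idx L) ℝ}
    (hM : PrimalFeasible ρ M) (i j : Idx L) : M i j ∈ Set.Icc (0 : ℝ) 1 := by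
  obtain ⟨-, hnonneg, hrow, hdiag⟩ := hM
  obtain ⟨p, t⟩ := i
  obtain ⟨q, u⟩ := j
  obtain rfl | hpq := eq_or_ne p q
  · rw [hdiag]
    split_ifs
    · exact mu1_mem_Icc hρ p t
    · exact ⟨le_rfl, zero_le_one⟩
  · refine ⟨hnonneg p q hpq t u, ?_⟩
    calc M (p, t) (q, u) ≤ ∑ u', M (p, t) (q, u') :=
          single_le_sum (fun u' _ => hnonneg p q hpq t u') (mem_univ u)
      _ = mu1 ρ p t := hrow p q hpq t
      _ ≤ 1 := (mu1_mem_Icc hρ p t).2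

theorem primalValues_bddBelow (hρ : ∀ p, 0 ≤ ρ p ∧ ρ p ≤ 1) (C : Matrix (Idx L) (Idx L) ℝ) :
    BddBelow (primalValues ρ C) := by
  refine ⟨-∑ i, ∑ j, |C i j|, ?_⟩
  rintro _ ⟨M, hM, rfl⟩
  exact neg_sum_abs_le_trace_mul C M (hM.mem_Icc hρ)

end Values

theorem three_marginal_sandwich_general (L : ℕ) (ρ : Fin L → ℝ)
    (hρ : ∀ p, 0 ≤ ρ p ∧ ρ p ≤ 1)
    (C : Matrix (Idx L) (Idx L) ℝ)
    (hCdiag : ∀ p : Fin L, ∀ t u : Fin 2, C (p, t) (p, u) = 0) :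
    sInf (primalValues ρ C) ≤ sInf (threeValues ρ C) ∧
    sInf (threeValues ρ C) ≤ sInf (sceValues ρ C) := by
  have hsce := sceValues_subset_threeValues (ρ := ρ) hCdiag
  have hthree := threeValues_subset_primalValues (ρ := ρ) C
  have hbdd := primalValues_bddBelow hρ C
  have hne := sceValues_nonempty hρ C
  exact ⟨csInf_le_csInf hbdd (hne.mono hsce) hthree, csInf_le_csInf (hbdd.mono hthree) hne hsce⟩

/-- The 3-marginal relaxation is sandwiched between the 2-marginal relaxation and
the exact MMOT value: `E_sdp[ρ] ≤ E_3sdp[ρ] ≤ E_sce[ρ]`. -/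
theorem three_marginal_sandwich (L : ℕ) (hL : 3 ≤ L) (ρ : Fin L → ℝ)
    (hρ : ∀ p, 0 ≤ ρ p ∧ ρ p ≤ 1)
    (C : Matrix (Idx L) (Idx L) ℝ) (hCsymm : C.IsSymm)
    (hCdiag : ∀ p : Fin L, ∀ t u : Fin 2, C (p, t) (p, u) = 0) :
    sInf (primalValues ρ C) ≤ sInf (threeValues ρ C) ∧
    sInf (threeValues ρ C) ≤ sInf (sceValues ρ C) :=
  three_marginal_sandwich_general L ρ hρ C hCdiag
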